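/- Let n be a positive integer and g a nonnegative integer with gcd(n,g)=1. Then the spectral norm of the g-circulant matrix C_{n,g}(P) with first row (P_1,P_2,…,P_n) equals (P_{n+1} + P_n − 1)/2. -/

import Mathlib

/-- The `g`-circulant matrix of size `n` with first row `(a 0, a 1, …, a (n-1))`:
its `(i,j)` entry (0-indexed) equals `a ((j - i*g) mod n)`. -/
def gCirc {α : Type*} (n g : ℕ) (a : ℕ → α) : Matrix (Fin n) (Fin n) α :=
  Matrix.of fun i j => a ((j.val + (n - (i.val * g) % n)) % n)

/-- The spectral norm (operator 2-norm) of a real square matrix. -/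
noncomputable def matrixSpectralNorm {n : ℕ} (A : Matrix (Fin n) (Fin n) ℝ) : ℝ :=
  ‖Matrix.toEuclideanCLM (𝕜 := ℝ) A‖

/-!
When `gcd(n, g) = 1`, every row and every column of `C_{n,g}(P)` is a permutation of
`(P_1, …, P_n)`, so all row and column sums equal `s = P_1 + ⋯ + P_n = (P_{n+1} + P_n - 1) / 2`.
The all-ones vector is an eigenvector for `s`, giving `‖C‖₂ ≥ s`, and since the entries are
nonnegative the Schur test (Cauchy–Schwarz row by row, then summing over columns) gives
`‖C‖₂ ≤ s`.
-/

open Finset Matrix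

section SchurTest

variable {𝕜 ι κ : Type*} [RCLike 𝕜] [Fintype κ]

lemma sq_norm_mulVec_apply_le (B : Matrix ι κ 𝕜) (x : κ → 𝕜) (i : ι) :
    ‖(B *ᵥ x) i‖ ^ 2 ≤ (∑ j, ‖B i j‖) * ∑ j, ‖B i j‖ * ‖x j‖ ^ 2 := by
  calc ‖(B *ᵥ x) i‖ ^ 2 ≤ (∑ j, ‖B i j‖ * ‖x j‖) ^ 2 := by
        gcongr
        simpa only [mulVec, dotProduct, norm_mul] using norm_sum_le univ fun j => B i j * x j
    _ ≤ (∑ j, ‖B i j‖) * ∑ j, ‖B i j‖ * ‖x j‖ ^ 2 :=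
        sum_sq_le_sum_mul_sum_of_sq_le_mul _ (fun _ _ => norm_nonneg _)
          (fun _ _ => by positivity) fun _ _ => le_of_eq (by ring)

variable [Fintype ι] [DecidableEq ι]

/-- The Schur test with constant weights. -/
lemma norm_toEuclideanCLM_le_of_sum_norm_le (B : Matrix ι ι 𝕜) {s : ℝ} (hs : 0 ≤ s)
    (hrow : ∀ i, ∑ j, ‖B i j‖ ≤ s) (hcol : ∀ j, ∑ i, ‖B i j‖ ≤ s) :
    ‖toEuclideanCLM (𝕜 := 𝕜) B‖ ≤ s := by
  refine ContinuousLinearMap.opNorm_le_bound _ hs fun x => le_of_sq_le_sq ?_ (by positivity)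
  calc ‖toEuclideanCLM (𝕜 := 𝕜) B x‖ ^ 2 = ∑ i, ‖(B *ᵥ x.ofLp) i‖ ^ 2 := by
        rw [EuclideanSpace.norm_sq_eq, ofLp_toEuclideanCLM]
    _ ≤ ∑ i, s * ∑ j, ‖B i j‖ * ‖x j‖ ^ 2 := by
        gcongr with i
        exact (sq_norm_mulVec_apply_le B x.ofLp i).trans
          (mul_le_mul_of_nonneg_right (hrow i) (by positivity))
    _ = s * ∑ j, (∑ i, ‖B i j‖) * ‖x j‖ ^ 2 := by
        rw [← mul_sum, sum_comm]
        simp only [sum_mul]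
    _ ≤ s * ∑ j, s * ‖x j‖ ^ 2 := by gcongr with j; exact hcol j
    _ = (s * ‖x‖) ^ 2 := by rw [← mul_sum, mul_pow, EuclideanSpace.norm_sq_eq]; ring

lemma norm_le_norm_toEuclideanCLM_of_mulVec_eq_smul (B : Matrix ι ι 𝕜) {v : ι → 𝕜}
    (hv : v ≠ 0) {c : 𝕜} (h : B *ᵥ v = c • v) : ‖c‖ ≤ ‖toEuclideanCLM (𝕜 := 𝕜) B‖ := by
  have hv_pos : 0 < ‖WithLp.toLp 2 v‖ := norm_pos_iff.mpr (by simpa using hv)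
  refine le_of_mul_le_mul_right ?_ hv_pos
  calc ‖c‖ * ‖WithLp.toLp 2 v‖ = ‖toEuclideanCLM (𝕜 := 𝕜) B (WithLp.toLp 2 v)‖ := by
        rw [toEuclideanCLM_toLp, h, WithLp.toLp_smul, norm_smul]
    _ ≤ _ := (toEuclideanCLM (𝕜 := 𝕜) B).le_opNorm _

lemma norm_toEuclideanCLM_eq_of_sum_eq [Nonempty ι] (B : Matrix ι ι ℝ) (s : ℝ)
    (hB : ∀ i j, 0 ≤ B i j) (hrow : ∀ i, ∑ j, B i j = s) (hcol : ∀ j, ∑ i, B i j = s) :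
    ‖toEuclideanCLM (𝕜 := ℝ) B‖ = s := by
  obtain ⟨i₀⟩ := ‹Nonempty ι›
  have hs : 0 ≤ s := hrow i₀ ▸ sum_nonneg fun j _ => hB i₀ j
  have hnorm : ∀ i j, ‖B i j‖ = B i j := fun i j => Real.norm_of_nonneg (hB i j)
  refine le_antisymm (norm_toEuclideanCLM_le_of_sum_norm_le B hs (by simp [hnorm, hrow])
    (by simp [hnorm, hcol])) ?_
  have hones : B *ᵥ (fun _ => 1) = s • fun _ => 1 := by
    ext i
    simp [mulVec, dotProduct, hrow]
  simpa [abs_of_nonneg hs] using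
    norm_le_norm_toEuclideanCLM_of_mulVec_eq_smul B (by simp [funext_iff]) hones

end SchurTest

section GCirculant

open Fin.NatCast

variable {α : Type*} {n : ℕ}

lemma gCirc_apply [NeZero n] (g : ℕ) (a : ℕ → α) (i j : Fin n) :
    gCirc n g a i j = a (j - i * (g : Fin n)).val := by
  simp only [gCirc, of_apply, Fin.val_sub, Fin.val_mul, Fin.val_natCast, Nat.mul_mod_mod]
  rw [Nat.add_comm]

lemma Fin.mul_natCast_injective_of_coprime [NeZero n] {g : ℕ} (hg : n.Coprime g) :
    Function.Injective fun i : Fin n => i * (g : Fin n) := by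
  intro i i' h
  have hmod : i.val * g ≡ i'.val * g [MOD n] := by
    simpa only [Nat.ModEq, Fin.ext_iff, Fin.val_mul, Fin.val_natCast, Nat.mul_mod_mod] using h
  exact Fin.ext (Nat.ModEq.cancel_right_of_coprime hg hmod |>.eq_of_lt_of_lt i.isLt i'.isLt)

variable [AddCommMonoid α]

lemma sum_gCirc_row (g : ℕ) (a : ℕ → α) (i : Fin n) :
    ∑ j, gCirc n g a i j = ∑ m ∈ range n, a m := by
  have : NeZero n := NeZero.of_pos i.pos
  simp_rw [gCirc_apply, ← Fin.sum_univ_eq_sum_range]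
  exact Fintype.sum_equiv (Equiv.subRight _) _ _ fun _ => rfl

lemma sum_gCirc_col {g : ℕ} (hg : n.Coprime g) (a : ℕ → α) (j : Fin n) :
    ∑ i, gCirc n g a i j = ∑ m ∈ range n, a m := by
  have : NeZero n := NeZero.of_pos j.pos
  simp_rw [gCirc_apply, ← Fin.sum_univ_eq_sum_range]
  refine Fintype.sum_bijective _ ?_ _ _ fun _ => rfl
  exact Finite.injective_iff_bijective.mp
    ((sub_right_injective (G := Fin n) (b := j)).comp (Fin.mul_natCast_injective_of_coprime hg))

end GCirculant

section PellRecurrence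

variable {R : Type*} {P : ℕ → R}

lemma nonneg_of_pell_rec [Semiring R] [PartialOrder R] [IsOrderedRing R]
    (h0 : 0 ≤ P 0) (h1 : 0 ≤ P 1) (hrec : ∀ m, P (m + 2) = 2 * P (m + 1) + P m) (m : ℕ) :
    0 ≤ P m := by
  induction m using Nat.twoStepInduction with
  | zero => exact h0
  | one => exact h1
  | more m hm hm1 => rw [hrec]; exact add_nonneg (mul_nonneg zero_le_two hm1) hm

lemma two_mul_sum_range_of_pell_rec [CommRing R] (h0 : P 0 = 0) (h1 : P 1 = 1)
    (hrec : ∀ m, P (m + 2) = 2 * P (m + 1) + P m) (N : ℕ) :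
    2 * ∑ m ∈ range N, P (m + 1) = P (N + 1) + P N - 1 := by
  induction N with
  | zero => simp [h0, h1]
  | succ k ih => rw [sum_range_succ, mul_add, ih, hrec]; ring

end PellRecurrence

/-- Spectral norm of the g-circulant matrix of Pell numbers. -/
theorem spectralNorm_gCirc_pell
    (P : ℕ → ℝ) (hP0 : P 0 = 0) (hP1 : P 1 = 1)
    (hrec : ∀ m : ℕ, P (m + 2) = 2 * P (m + 1) + P m)
    (n r : ℕ) (hn : 0 < n) (hgcd : Nat.gcd n r = 1) :
    matrixSpectralNorm (gCirc n r (fun m => P (m + 1))) = (P (n + 1) + P n - 1) / 2 := by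
  have : NeZero n := ⟨hn.ne'⟩
  have hP_nonneg := nonneg_of_pell_rec hP0.ge (hP1 ▸ zero_le_one) hrec
  rw [matrixSpectralNorm, norm_toEuclideanCLM_eq_of_sum_eq (gCirc n r fun m => P (m + 1)) _
    (fun _ _ => hP_nonneg _) (sum_gCirc_row r _) (sum_gCirc_col hgcd _),
    ← two_mul_sum_range_of_pell_rec hP0 hP1 hrec]
  ring
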